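/- arXiv:1807.08795 — 7 statements merged into one kernel-verified Lean document; each statement's English description precedes it below -/
import Mathlib

section
/- Let S = (s_1 < s_2 < ⋯ < s_r) be a strictly increasing sequence of positive integers. Then the permutohedron Π_S equals the set of all x ∈ ℝ^r satisfying x_1 + ⋯ + x_r = τ_r together with the inequalities ∑_{i∈P} x_i ≥ τ_{|P|} for every nonempty proper subset P ⊆ {1,…,r}. -/
/-- The permutohedron in `ℝ^r` on the values `s 0, …, s (r-1)`: the convex hull of
all points whose coordinates are `(s (σ 0), …, s (σ (r-1)))` for permutations `σ`. -/
def permutohedron (r : ℕ) (s : ℕ → ℝ) : Set (Fin r → ℝ) :=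
  convexHull ℝ {x : Fin r → ℝ | ∃ σ : Equiv.Perm (Fin r), ∀ i, x i = s (σ i)}

/-! The permutation points satisfy the inequalities because the `k` smallest values of a monotone
`s` are `s 0, …, s (k-1)`. Conversely, a point `x` of the polytope outside the convex hull would be
strictly separated from it by a linear functional `∑ cᵢ xᵢ`. Order the coordinates by a
permutation `π` making `c` increasing. Summation by parts writes `∑ cᵢ (s_{π⁻¹ i} - xᵢ)` as a
combination, with the nonnegative weights `c_{π(k+1)} - c_{π k}`, of the prefix surpluses
`∑_{j ≤ k} x_{π j} - τ_{k+1} ≥ 0`, plus `c_{π(r-1)}` times the total surplus `0`. So the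
permutation point `i ↦ s_{π⁻¹ i}` is at least as good as `x` for that functional, a
contradiction. -/

open Finset

theorem Fin.last_mul_sum_le_sum_mul {n : ℕ} {a w : Fin (n + 1) → ℝ} (ha : Monotone a)
    (hw : ∀ m, ∑ k ≤ m, w k ≤ 0) : a (last n) * ∑ k, w k ≤ ∑ k, a k * w k := by
  induction n with
  | zero => simp
  | succ n ih =>
    have hW : ∑ k : Fin (n + 1), w k.castSucc ≤ 0 := by
      simpa only [Fin.sum_Iic_castSucc, ← top_eq_last, Iic_top] using hw (last n).castSucc
    have hinit := ih (a := a ∘ castSucc) (w := w ∘ castSucc)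
      (ha.comp strictMono_castSucc.monotone)
      (fun m => by simpa [← Fin.sum_Iic_castSucc] using hw m.castSucc)
    have hlast : a (last (n + 1)) * ∑ k : Fin (n + 1), w k.castSucc ≤
        a (last n).castSucc * ∑ k : Fin (n + 1), w k.castSucc :=
      mul_le_mul_of_nonpos_right (ha (castSucc_lt_last _).le) hW
    simp only [Function.comp_apply] at hinit
    rw [sum_univ_castSucc, sum_univ_castSucc (fun k => a k * w k), mul_add]
    linarith

theorem Fin.sum_mul_nonneg_of_monotone {n : ℕ} {a w : Fin n → ℝ} (ha : Monotone a)
    (hw : ∀ m, ∑ k ≤ m, w k ≤ 0) (hsum : ∑ k, w k = 0) : 0 ≤ ∑ k, a k * w k := by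
  cases n with
  | zero => simp
  | succ n => simpa [hsum] using Fin.last_mul_sum_le_sum_mul ha hw

theorem Fin.sum_Iic_val_eq_sum_range {M : Type*} [AddCommMonoid M] {n : ℕ} (f : ℕ → M)
    (m : Fin n) : ∑ k ≤ m, f k = ∑ k ∈ range (m + 1), f k := by
  rw [Nat.range_succ_eq_Iic, ← Fin.map_valEmbedding_Iic, sum_map]
  rfl

theorem sum_range_card_le_sum_of_monotone {s : ℕ → ℝ} (hs : Monotone s) (Q : Finset ℕ) :
    ∑ i ∈ range #Q, s i ≤ ∑ i ∈ Q, s i := by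
  induction Q using Finset.induction_on_max with
  | empty => simp
  | insert a Q hlt ih =>
    have hQa : #Q ≤ a := by
      simpa using card_le_card (fun q hq => mem_range.2 (hlt q hq) : Q ⊆ range a)
    rw [card_insert_of_notMem (fun h => (hlt a h).false), sum_range_succ,
      sum_insert (fun h => (hlt a h).false)]
    linarith [hs hQa]

section Halfspaces

variable {r : ℕ} {s : ℕ → ℝ}

def permutohedronHalfspaces (r : ℕ) (s : ℕ → ℝ) : Set (Fin r → ℝ) :=
  {x | ∑ i, x i = ∑ i ∈ range r, s i ∧ ∀ P : Finset (Fin r), ∑ i ∈ range #P, s i ≤ ∑ i ∈ P, x i}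

theorem setOf_nonempty_ne_univ_eq_permutohedronHalfspaces (r : ℕ) (s : ℕ → ℝ) :
    {x : Fin r → ℝ | ∑ i, x i = ∑ i ∈ range r, s i ∧
      ∀ P : Finset (Fin r), P.Nonempty → P ≠ univ → ∑ i ∈ range #P, s i ≤ ∑ i ∈ P, x i} =
    permutohedronHalfspaces r s := by
  ext x
  refine ⟨fun ⟨htot, hP⟩ => ⟨htot, fun P => ?_⟩, fun ⟨htot, hP⟩ => ⟨htot, fun P _ _ => hP P⟩⟩
  rcases P.eq_empty_or_nonempty with rfl | hne
  · simp
  rcases eq_or_ne P univ with rfl | hne_univ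
  · simp [htot]
  · exact hP P hne hne_univ

theorem convex_permutohedronHalfspaces : Convex ℝ (permutohedronHalfspaces r s) := by
  intro x ⟨hx, hxP⟩ y ⟨hy, hyP⟩ a b ha hb hab
  have hsum (P : Finset (Fin r)) :
      ∑ i ∈ P, (a • x + b • y) i = a * ∑ i ∈ P, x i + b * ∑ i ∈ P, y i := by
    simp [sum_add_distrib, mul_sum]
  refine ⟨?_, fun P => ?_⟩
  · rw [hsum, hx, hy, ← add_mul, hab, one_mul]
  · calc ∑ i ∈ range #P, s i = a * ∑ i ∈ range #P, s i + b * ∑ i ∈ range #P, s i := by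
          rw [← add_mul, hab, one_mul]
      _ ≤ ∑ i ∈ P, (a • x + b • y) i := by
          rw [hsum]
          gcongr
          exacts [hxP P, hyP P]

theorem permutations_subset_permutohedronHalfspaces (hs : Monotone s) :
    {x : Fin r → ℝ | ∃ σ : Equiv.Perm (Fin r), ∀ i, x i = s (σ i)} ⊆
      permutohedronHalfspaces r s := by
  rintro x ⟨σ, hx⟩
  obtain rfl : x = fun i => s (σ i) := funext hx
  refine ⟨by rw [Equiv.sum_comp σ (fun i => s i), Fin.sum_univ_eq_sum_range], fun P => ?_⟩
  simpa using sum_range_card_le_sum_of_monotone hs (P.map (σ.toEmbedding.trans Fin.valEmbedding))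

theorem exists_perm_sum_mul_le {x : Fin r → ℝ} (hx : x ∈ permutohedronHalfspaces r s)
    (c : Fin r → ℝ) : ∃ σ : Equiv.Perm (Fin r), ∑ i, x i * c i ≤ ∑ i, s (σ i) * c i := by
  set π := Tuple.sort c
  have hprefix (m : Fin r) : ∑ k ≤ m, (s k - x (π k)) ≤ 0 := by
    have h := hx.2 ((Iic m).map π.toEmbedding)
    rw [sum_map, card_map, Fin.card_Iic, ← Fin.sum_Iic_val_eq_sum_range] at h
    simpa [sum_sub_distrib] using h
  have htotal : ∑ k : Fin r, (s k - x (π k)) = 0 := by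
    rw [sum_sub_distrib, Fin.sum_univ_eq_sum_range, Equiv.sum_comp π x, hx.1, sub_self]
  have key := Fin.sum_mul_nonneg_of_monotone (Tuple.monotone_sort c) hprefix htotal
  simp only [Function.comp_apply, mul_sub, sum_sub_distrib, sub_nonneg] at key
  refine ⟨π.symm, ?_⟩
  rw [← Equiv.sum_comp π, ← Equiv.sum_comp π (fun i => s (π.symm i) * c i)]
  simpa only [Equiv.symm_apply_apply, mul_comm] using key

theorem permutohedronHalfspaces_subset_permutohedron :
    permutohedronHalfspaces r s ⊆ permutohedron r s := by
  intro x hx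
  by_contra hx_out
  have hfinite : {x : Fin r → ℝ | ∃ σ : Equiv.Perm (Fin r), ∀ i, x i = s (σ i)}.Finite :=
    (Set.finite_range fun (σ : Equiv.Perm (Fin r)) i => s (σ i)).subset
      fun _ ⟨σ, hσ⟩ => ⟨σ, funext fun i => (hσ i).symm⟩
  obtain ⟨f, u, hf_lt, hu_lt⟩ := geometric_hahn_banach_closed_point (convex_convexHull ℝ _)
    (hfinite.isCompact_convexHull (𝕜 := ℝ)).isClosed hx_out
  obtain ⟨σ, hσ⟩ := exists_perm_sum_mul_le hx fun i => f fun j => if i = j then 1 else 0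
  have hv := hf_lt (fun i => s (σ i)) (subset_convexHull ℝ _ ⟨σ, fun _ => rfl⟩)
  have hf (y : Fin r → ℝ) : f y = ∑ i, y i * f fun j => if i = j then 1 else 0 :=
    f.toLinearMap.pi_apply_eq_sum_univ y
  rw [hf] at hv hu_lt
  linarith

theorem permutohedron_eq_permutohedronHalfspaces (hs : Monotone s) :
    permutohedron r s = permutohedronHalfspaces r s :=
  (convexHull_min (permutations_subset_permutohedronHalfspaces hs)
    convex_permutohedronHalfspaces).antisymm permutohedronHalfspaces_subset_permutohedron

end Halfspaces

theorem permutohedron_eq_halfspaces_general (r : ℕ) (s : ℕ → ℕ)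
    (hmono : StrictMono s) :
    permutohedron r (fun i => (s i : ℝ)) =
      {x : Fin r → ℝ |
        (∑ i, x i) = ∑ i ∈ Finset.range r, (s i : ℝ) ∧
        ∀ P : Finset (Fin r), P.Nonempty → P ≠ Finset.univ →
          ∑ i ∈ Finset.range P.card, (s i : ℝ) ≤ ∑ i ∈ P, x i} :=
  (permutohedron_eq_permutohedronHalfspaces fun _ _ h => Nat.cast_le.2 (hmono.monotone h)).trans
    (setOf_nonempty_ne_univ_eq_permutohedronHalfspaces r _).symm

/-- For a strictly increasing sequence of positive integers
`s_1 < ⋯ < s_r` (here `s 0 < s 1 < ⋯`, 0-based), the permutohedron `Π_S` equals the set of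
points with `x_1 + ⋯ + x_r = τ_r` and `∑_{i ∈ P} x_i ≥ τ_{|P|}` for every nonempty proper
subset `P ⊆ {1,…,r}`, where `τ_k = s_1 + ⋯ + s_k`. -/
theorem permutohedron_eq_halfspaces (r : ℕ) (s : ℕ → ℕ)
    (hmono : StrictMono s) (hpos : ∀ i, 0 < s i) :
    permutohedron r (fun i => (s i : ℝ)) =
      {x : Fin r → ℝ |
        (∑ i, x i) = ∑ i ∈ Finset.range r, (s i : ℝ) ∧
        ∀ P : Finset (Fin r), P.Nonempty → P ≠ Finset.univ →
          ∑ i ∈ Finset.range P.card, (s i : ℝ) ≤ ∑ i ∈ P, x i} :=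
  permutohedron_eq_halfspaces_general r s hmono
end

section
/- Let S = (s_1 < ⋯ < s_r) be a strictly increasing sequence of positive integers, and let 𝔭 = (P_1,…,P_{k+1}) be an ordered partition of {1,…,r} with m_j = |P_1| + ⋯ + |P_j| and S_j = (s_{m_{j−1}+1},…,s_{m_j}) for j = 1,…,k+1. Then the map sending x ∈ ℝ^r to the tuple whose j-th entry lists the coordinates of x indexed by P_j in increasing index order restricts to a bijection from the face Π_𝔭 onto the product of permutohedra Π_{S_1} × Π_{S_2} × ⋯ × Π_{S_{k+1}}. -/
open Finset Function

section SumOverFinsetOfNat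

variable {M : Type*} [AddCommMonoid M] [PartialOrder M] {s : ℕ → M}

theorem Finset.sum_range_card_le_sum [IsOrderedAddMonoid M] (hs : Monotone s) (T : Finset ℕ) :
    ∑ i ∈ range #T, s i ≤ ∑ i ∈ T, s i := by
  induction T using Finset.induction_on_max with
  | empty => simp
  | insert a T hlt ih =>
    have haT : a ∉ T := fun h => (hlt a h).false
    have hcard : #T ≤ a := by simpa using card_le_card fun x hx => mem_range.2 (hlt x hx)
    rw [card_insert_of_notMem haT, sum_range_succ, sum_insert haT, add_comm (s a)]
    exact add_le_add ih (hs hcard)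

theorem Finset.sum_eq_sum_range_card_iff [IsOrderedCancelAddMonoid M] (hs : StrictMono s)
    (T : Finset ℕ) : ∑ i ∈ T, s i = ∑ i ∈ range #T, s i ↔ T = range #T := by
  refine ⟨fun h => ?_, fun h => by conv_lhs => rw [h]⟩
  induction T using Finset.induction_on_max with
  | empty => simp
  | insert a T hlt ih =>
    have haT : a ∉ T := fun h => (hlt a h).false
    have hcard : #T ≤ a := by simpa using card_le_card fun x hx => mem_range.2 (hlt x hx)
    rw [card_insert_of_notMem haT, sum_range_succ, sum_insert haT, add_comm (s a)] at h
    obtain ⟨hT, ha⟩ := (add_eq_add_iff_eq_and_eq (sum_range_card_le_sum hs.monotone T)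
      (hs.monotone hcard)).1 h.symm
    rw [card_insert_of_notMem haT, range_add_one, ← ih hT.symm, hs.injective ha]

end SumOverFinsetOfNat

theorem Finset.map_eq_range_of_forall_lt {α : Type*} {B : Finset α} (f : α ↪ ℕ)
    (h : ∀ i ∈ B, f i < #B) : B.map f = range #B :=
  eq_of_subset_of_card_le (fun u hu => by
    obtain ⟨i, hi, rfl⟩ := mem_map.1 hu
    exact mem_range.2 (h i hi)) (by simp)

theorem convexHull_inter_iInter_eq_of_forall_le {𝕜 E ι : Type*} [Field 𝕜] [LinearOrder 𝕜]
    [IsStrictOrderedRing 𝕜] [AddCommGroup E] [Module 𝕜 E] {S : Set E}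
    (l : ι → E →ₗ[𝕜] 𝕜) (c : ι → 𝕜) (hS : ∀ j, ∀ x ∈ S, c j ≤ l j x) :
    convexHull 𝕜 S ∩ ⋂ j, {x | l j x = c j} =
      convexHull 𝕜 (S ∩ ⋂ j, {x | l j x = c j}) := by
  classical
  refine subset_antisymm ?_ (Set.subset_inter (convexHull_mono Set.inter_subset_left)
    (convexHull_min Set.inter_subset_right
      (convex_iInter fun j => convex_hyperplane (l j).isLinear _)))
  rintro _ ⟨hx, hxc⟩
  rw [_root_.convexHull_eq] at hx
  obtain ⟨ι', t, w, z, hw₀, hw₁, hz, rfl⟩ := hx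
  -- the average of the nonnegative defects `l j (z a) - c j` vanishes, so each weighted one does
  have htight : ∀ a ∈ t, w a ≠ 0 → ∀ j, l j (z a) = c j := by
    intro a ha hwa j
    have hsum : ∑ b ∈ t, w b * (l j (z b) - c j) = 0 := by
      have := Set.mem_iInter.1 hxc j
      simp only [Set.mem_ofPred_eq, centerMass_eq_of_sum_1 _ _ hw₁, map_sum, map_smul,
        smul_eq_mul] at this
      simp only [mul_sub, sum_sub_distrib, ← sum_mul, hw₁, this, one_mul, sub_self]
    have := (sum_eq_zero_iff_of_nonneg fun b hb =>
      mul_nonneg (hw₀ b hb) (sub_nonneg.2 (hS j _ (hz b hb)))).1 hsum a ha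
    linarith [(mul_eq_zero.1 this).resolve_left hwa]
  rw [← centerMass_filter_ne_zero]
  refine centerMass_mem_convexHull _ (fun a ha => hw₀ a (mem_filter.1 ha).1)
    (by rw [sum_filter_ne_zero, hw₁]; exact one_pos) fun a ha => ?_
  obtain ⟨ha, hwa⟩ := mem_filter.1 ha
  exact ⟨hz a ha, Set.mem_iInter.2 (htight a ha hwa)⟩

section PartitionEquiv

variable {ι : Type*} [Fintype ι]

theorem sum_card_eq_card_of_biUnion_eq_univ {α : Type*} [Fintype α] [DecidableEq α]
    {Q : ι → Finset α} (hdisj : Pairwise (Disjoint on Q)) (hcover : univ.biUnion Q = univ) :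
    ∑ j, #(Q j) = Fintype.card α := by
  rw [← card_biUnion fun a _ b _ h => hdisj h, hcover, card_univ]

noncomputable def sigmaOrderEmbOfFinEquiv {α : Type*} [Fintype α] [LinearOrder α]
    (Q : ι → Finset α) (hdisj : Pairwise (Disjoint on Q)) (hcover : univ.biUnion Q = univ) :
    (Σ j, Fin #(Q j)) ≃ α :=
  Equiv.ofBijective (fun p => (Q p.1).orderEmbOfFin rfl p.2)
    ((Fintype.bijective_iff_injective_and_card _).2 ⟨by
      rintro ⟨j₁, p₁⟩ ⟨j₂, p₂⟩ h
      dsimp only at h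
      obtain rfl : j₁ = j₂ := by
        by_contra hne
        exact disjoint_left.1 (hdisj hne) (orderEmbOfFin_mem _ rfl p₁)
          (h ▸ orderEmbOfFin_mem _ rfl p₂)
      obtain rfl := ((Q j₁).orderEmbOfFin rfl).injective h
      rfl, by simp [sum_card_eq_card_of_biUnion_eq_univ hdisj hcover]⟩)

theorem sigmaOrderEmbOfFinEquiv_symm_apply {α : Type*} [Fintype α] [LinearOrder α]
    {Q : ι → Finset α} (hdisj : Pairwise (Disjoint on Q)) (hcover : univ.biUnion Q = univ)
    (j : ι) (p : Fin #(Q j)) :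
    (sigmaOrderEmbOfFinEquiv Q hdisj hcover).symm ((Q j).orderEmbOfFin rfl p) = ⟨j, p⟩ :=
  (Equiv.symm_apply_eq _).2 rfl

end PartitionEquiv

theorem exists_perm_eq_add_of_injective {n m : ℕ} {g : Fin n → ℕ} (hg : Injective g)
    (hmem : ∀ p, g p ∈ Ico m (m + n)) : ∃ π : Equiv.Perm (Fin n), ∀ p, g p = m + π p := by
  have hlt : ∀ p, g p - m < n := fun p => by have := mem_Ico.1 (hmem p); omega
  have hinj : Injective fun p => (⟨g p - m, hlt p⟩ : Fin n) := fun p q h => by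
    have := mem_Ico.1 (hmem p); have := mem_Ico.1 (hmem q)
    exact hg (by simp only [Fin.ext_iff] at h; omega)
  refine ⟨Equiv.ofBijective _ (Finite.injective_iff_bijective.1 hinj), fun p => ?_⟩
  have := mem_Ico.1 (hmem p)
  simp only [Equiv.ofBijective_apply]
  omega

section Blocks

variable {ι : Type*} [Fintype ι] [LinearOrder ι]

def blockStart (n : ι → ℕ) (j : ι) : ℕ :=
  ∑ j' ∈ univ.filter (· < j), n j'

theorem blockStart_add_self (n : ι → ℕ) (j : ι) :
    blockStart n j + n j = ∑ j' ∈ univ.filter (· ≤ j), n j' := by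
  have : univ.filter (· ≤ j) = insert j (univ.filter (· < j)) := by
    ext j'
    simp [le_iff_lt_or_eq, or_comm]
  rw [this, sum_insert (by simp), add_comm, blockStart]

theorem blockStart_add_le_of_lt (n : ι → ℕ) {j j' : ι} (h : j < j') :
    blockStart n j + n j ≤ blockStart n j' := by
  rw [blockStart_add_self]
  exact sum_le_sum_of_subset fun a => by simpa using fun ha => ha.trans_lt h

theorem blockStart_add_self_mono (n : ι → ℕ) : Monotone fun j => blockStart n j + n j := by
  intro j' j h
  simp only [blockStart_add_self]
  exact sum_le_sum_of_subset fun a => by simpa using fun ha => ha.trans h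

theorem blockStart_add_le_sum (n : ι → ℕ) (j : ι) :
    blockStart n j + n j ≤ ∑ j', n j' := by
  rw [blockStart_add_self]
  exact sum_le_sum_of_subset (filter_subset _ _)

noncomputable def blockStartEquiv (n : ι → ℕ) : (Σ j, Fin (n j)) ≃ Fin (∑ j, n j) :=
  Equiv.ofBijective
    (fun p => ⟨blockStart n p.1 + p.2, by have := blockStart_add_le_sum n p.1; omega⟩)
    ((Fintype.bijective_iff_injective_and_card _).2 ⟨by
      rintro ⟨j₁, p₁⟩ ⟨j₂, p₂⟩ h
      have hval := congrArg Fin.val h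
      dsimp only at hval
      rcases lt_trichotomy j₁ j₂ with hj | rfl | hj
      · have := blockStart_add_le_of_lt n hj; omega
      · obtain rfl : p₁ = p₂ := Fin.ext (by omega)
        rfl
      · have := blockStart_add_le_of_lt n hj; omega, by simp⟩)

@[simp]
theorem blockStartEquiv_apply_val (n : ι → ℕ) (j : ι) (p : Fin (n j)) :
    (blockStartEquiv n ⟨j, p⟩ : ℕ) = blockStart n j + p :=
  rfl

theorem map_biUnion_le_eq_range_iff {α : Type*} [DecidableEq α] {Q : ι → Finset α}
    (hdisj : Pairwise (Disjoint on Q)) (f : α ↪ ℕ) :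
    (∀ j, ((univ.filter (· ≤ j)).biUnion Q).map f =
        range (∑ j' ∈ univ.filter (· ≤ j), #(Q j'))) ↔
      ∀ j, ∀ i ∈ Q j, f i ∈
        Ico (blockStart (fun j => #(Q j)) j) (blockStart (fun j => #(Q j)) j + #(Q j)) := by
  have hcard : ∀ J : Finset ι, #(J.biUnion Q) = ∑ j ∈ J, #(Q j) :=
    fun J => card_biUnion fun a _ b _ h => hdisj h
  constructor
  · intro h j i hi
    have hupper : ∀ j', ∀ i ∈ Q j', f i < blockStart (fun j => #(Q j)) j' + #(Q j') := by
      intro j' i hi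
      rw [blockStart_add_self, ← mem_range, ← h j']
      exact mem_map_of_mem f (mem_biUnion.2 ⟨j', by simp, hi⟩)
    refine mem_Ico.2 ⟨not_lt.1 fun hlt => ?_, hupper j i hi⟩
    have hlow :
        ((univ.filter (· < j)).biUnion Q).map f = range (blockStart (fun j => #(Q j)) j) := by
      rw [blockStart, ← hcard]
      refine map_eq_range_of_forall_lt f fun i' hi' => ?_
      obtain ⟨j', hj', hi'⟩ := mem_biUnion.1 hi'
      rw [hcard]
      exact (hupper j' i' hi').trans_le (blockStart_add_le_of_lt _ (by simpa using hj'))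
    obtain ⟨j', hj', hi'⟩ := mem_biUnion.1 ((mem_map' f).1 (hlow ▸ mem_range.2 hlt))
    exact disjoint_left.1 (hdisj (mem_filter.1 hj').2.ne) hi' hi
  · intro h j
    rw [← hcard]
    refine map_eq_range_of_forall_lt f fun i hi => ?_
    obtain ⟨j', hj', hi⟩ := mem_biUnion.1 hi
    rw [hcard, ← blockStart_add_self]
    exact (mem_Ico.1 (h j' i hi)).2.trans_le (blockStart_add_self_mono _ (by simpa using hj'))

end Blocks

section BlockRestrict

variable {ι α : Type*} [LinearOrder α]

def blockRestrict (R : Type*) [Semiring R] (Q : ι → Finset α) :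
    (α → R) →ₗ[R] ∀ j, Fin #(Q j) → R :=
  LinearMap.pi fun j => LinearMap.funLeft R R ((Q j).orderEmbOfFin rfl)

@[simp]
theorem blockRestrict_apply (R : Type*) [Semiring R] (Q : ι → Finset α) (x : α → R) (j : ι)
    (p : Fin #(Q j)) : blockRestrict R Q x j p = x ((Q j).orderEmbOfFin rfl p) :=
  rfl

theorem blockRestrict_injective (R : Type*) [Semiring R] [Fintype ι] [Fintype α]
    {Q : ι → Finset α} (hcover : univ.biUnion Q = univ) : Injective (blockRestrict R Q) := by
  refine fun x y h => funext fun i => ?_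
  have hi : i ∈ univ.biUnion Q := hcover ▸ mem_univ i
  obtain ⟨j, -, hi⟩ := mem_biUnion.1 hi
  obtain ⟨p, rfl⟩ : i ∈ Set.range ((Q j).orderEmbOfFin rfl) := by
    rwa [range_orderEmbOfFin]
  exact congrFun (congrFun h j) p

end BlockRestrict

section PermutohedronFace

def permutohedronVertices (r : ℕ) (s : ℕ → ℝ) : Set (Fin r → ℝ) :=
  {x | ∃ σ : Equiv.Perm (Fin r), ∀ i, x i = s (σ i)}

variable {r : ℕ} {s : ℕ → ℝ}

theorem sum_range_card_le_sum_of_mem_permutohedronVertices (hs : Monotone s) {x : Fin r → ℝ}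
    (hx : x ∈ permutohedronVertices r s) (B : Finset (Fin r)) :
    ∑ i ∈ range #B, s i ≤ ∑ i ∈ B, x i := by
  obtain ⟨σ, hσ⟩ := hx
  simpa [hσ] using sum_range_card_le_sum hs (B.map (σ.toEmbedding.trans Fin.valEmbedding))

theorem sum_perm_eq_sum_range_card_iff (hs : StrictMono s) (σ : Equiv.Perm (Fin r))
    (B : Finset (Fin r)) :
    ∑ i ∈ B, s (σ i) = ∑ i ∈ range #B, s i ↔
      B.map (σ.toEmbedding.trans Fin.valEmbedding) = range #B := by
  simpa using sum_eq_sum_range_card_iff hs (B.map (σ.toEmbedding.trans Fin.valEmbedding))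

variable {ι : Type*} [Fintype ι] [LinearOrder ι]

/-- The equations `∑_{i ∈ P_1 ∪ ⋯ ∪ P_j} x_i = τ_{m_j}` cutting out the face `Π_𝔭`, with
`Q j = P_{j+1}`. -/
def partitionHyperplanes (Q : ι → Finset (Fin r)) (s : ℕ → ℝ) : Set (Fin r → ℝ) :=
  ⋂ j, {x | ∑ i ∈ (univ.filter (· ≤ j)).biUnion Q, x i =
    ∑ i ∈ range (∑ j' ∈ univ.filter (· ≤ j), #(Q j')), s i}

theorem permutohedron_inter_partitionHyperplanes (hs : Monotone s) {Q : ι → Finset (Fin r)}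
    (hdisj : Pairwise (Disjoint on Q)) :
    permutohedron r s ∩ partitionHyperplanes Q s =
      convexHull ℝ (permutohedronVertices r s ∩ partitionHyperplanes Q s) := by
  have := convexHull_inter_iInter_eq_of_forall_le
    (fun j => ∑ i ∈ (univ.filter (· ≤ j)).biUnion Q, LinearMap.proj (R := ℝ) i)
    (fun j => ∑ i ∈ range (∑ j' ∈ univ.filter (· ≤ j), #(Q j')), s i) fun j x hx => by
      simp only [LinearMap.sum_apply, LinearMap.proj_apply]
      rw [← card_biUnion fun a _ b _ h => hdisj h]
      exact sum_range_card_le_sum_of_mem_permutohedronVertices hs hx _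
  simp only [LinearMap.sum_apply, LinearMap.proj_apply] at this
  exact this

theorem perm_mem_partitionHyperplanes_iff (hs : StrictMono s) {Q : ι → Finset (Fin r)}
    (hdisj : Pairwise (Disjoint on Q)) (σ : Equiv.Perm (Fin r)) :
    (fun i => s (σ i)) ∈ partitionHyperplanes Q s ↔
      ∀ j, ∀ i ∈ Q j, (σ i : ℕ) ∈
        Ico (blockStart (fun j => #(Q j)) j) (blockStart (fun j => #(Q j)) j + #(Q j)) := by
  simp only [partitionHyperplanes, Set.mem_iInter, Set.mem_ofPred_eq]
  refine (forall_congr' fun j => ?_).trans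
    (map_biUnion_le_eq_range_iff hdisj (σ.toEmbedding.trans Fin.valEmbedding))
  rw [← card_biUnion fun a _ b _ h => hdisj h, sum_perm_eq_sum_range_card_iff hs]

theorem image_blockRestrict_permutohedronVertices_inter (hs : StrictMono s)
    {Q : ι → Finset (Fin r)} (hdisj : Pairwise (Disjoint on Q))
    (hcover : univ.biUnion Q = univ) :
    blockRestrict ℝ Q '' (permutohedronVertices r s ∩ partitionHyperplanes Q s) =
      Set.univ.pi fun j =>
        permutohedronVertices #(Q j) fun i => s (blockStart (fun j => #(Q j)) j + i) := by
  ext v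
  constructor
  · rintro ⟨x, ⟨⟨σ, hσ⟩, hx⟩, rfl⟩ j -
    obtain rfl : x = fun i => s (σ i) := funext hσ
    obtain ⟨π, hπ⟩ := exists_perm_eq_add_of_injective
      (g := fun p => (σ ((Q j).orderEmbOfFin rfl p) : ℕ))
      (Fin.val_injective.comp (σ.injective.comp ((Q j).orderEmbOfFin rfl).injective))
      fun p => (perm_mem_partitionHyperplanes_iff hs hdisj σ).1 hx j _ (orderEmbOfFin_mem _ _ p)
    exact ⟨π, fun p => by simp [hπ p]⟩
  · intro hv
    choose π hπ using fun j => hv j (Set.mem_univ j)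
    let σ : Equiv.Perm (Fin r) := (sigmaOrderEmbOfFinEquiv Q hdisj hcover).symm.trans
      ((Equiv.sigmaCongrRight π).trans ((blockStartEquiv fun j => #(Q j)).trans
        (finCongr (by rw [sum_card_eq_card_of_biUnion_eq_univ hdisj hcover, Fintype.card_fin]))))
    have hσ : ∀ j p,
        (σ ((Q j).orderEmbOfFin rfl p) : ℕ) = blockStart (fun j => #(Q j)) j + π j p :=
      fun j p => by simp [σ, sigmaOrderEmbOfFinEquiv_symm_apply]
    refine ⟨fun i => s (σ i), ⟨⟨σ, fun _ => rfl⟩,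
      (perm_mem_partitionHyperplanes_iff hs hdisj σ).2 fun j i hi => ?_⟩,
      funext fun j => funext fun p => by simp [hσ, hπ]⟩
    obtain ⟨p, rfl⟩ : i ∈ Set.range ((Q j).orderEmbOfFin rfl) := by rwa [range_orderEmbOfFin]
    simp [hσ]

theorem image_blockRestrict_permutohedron_inter (hs : StrictMono s) {Q : ι → Finset (Fin r)}
    (hdisj : Pairwise (Disjoint on Q)) (hcover : univ.biUnion Q = univ) :
    blockRestrict ℝ Q '' (permutohedron r s ∩ partitionHyperplanes Q s) =
      Set.univ.pi fun j =>
        permutohedron #(Q j) fun i => s (blockStart (fun j => #(Q j)) j + i) := by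
  rw [permutohedron_inter_partitionHyperplanes hs.monotone hdisj, LinearMap.image_convexHull,
    image_blockRestrict_permutohedronVertices_inter hs hdisj hcover, convexHull_pi]
  rfl

end PermutohedronFace

theorem partitionFace_bijOn_prod_permutohedra_general (r k : ℕ) (s : ℕ → ℕ)
    (hmono : StrictMono s)
    (Q : Fin (k + 1) → Finset (Fin r))
    (hdisj : ∀ j j', j ≠ j' → Disjoint (Q j) (Q j'))
    (hcover : Finset.univ.biUnion Q = (Finset.univ : Finset (Fin r))) :
    Set.BijOn
      (fun (x : Fin r → ℝ) (j : Fin (k + 1)) (i : Fin (Q j).card) =>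
        x ((Q j).orderEmbOfFin rfl i))
      (permutohedron r (fun i => (s i : ℝ)) ∩
        ⋂ j : Fin (k + 1),
          {x : Fin r → ℝ |
            ∑ i ∈ (Finset.univ.filter (fun j' => j' ≤ j)).biUnion Q, x i =
              ∑ i ∈ Finset.range
                  (∑ j' ∈ Finset.univ.filter (fun j' => j' ≤ j), (Q j').card),
                (s i : ℝ)})
      (Set.univ.pi fun j : Fin (k + 1) =>
        permutohedron (Q j).card fun i =>
          (s ((∑ j' ∈ Finset.univ.filter (fun j' => j' < j), (Q j').card) + i) : ℝ)) := by
  have hinj := blockRestrict_injective ℝ hcover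
  have himage := image_blockRestrict_permutohedron_inter (Nat.strictMono_cast.comp hmono)
    hdisj hcover
  exact himage ▸ hinj.injOn.bijOn_image

/-- Let `𝔭 = (P_1,…,P_{k+1})` be an ordered partition of `{1,…,r}`
(here `Q : Fin (k+1) → Finset (Fin r)`, each block nonempty, pairwise disjoint, covering).
With `m_j = |P_1| + ⋯ + |P_j|` and `S_j = (s_{m_{j-1}+1},…,s_{m_j})`, the map sending `x` to
the tuple whose `j`-th entry lists the coordinates of `x` indexed by `P_j` in increasing
index order restricts to a bijection from the face `Π_𝔭` (cut out inside `Π_S` by the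
equalities `∑_{i ∈ P_1 ∪ ⋯ ∪ P_j} x_i = τ_{m_j}`) onto the product
`Π_{S_1} × ⋯ × Π_{S_{k+1}}`. -/
theorem partitionFace_bijOn_prod_permutohedra (r k : ℕ) (s : ℕ → ℕ)
    (hmono : StrictMono s) (hpos : ∀ i, 0 < s i)
    (Q : Fin (k + 1) → Finset (Fin r))
    (hne : ∀ j, (Q j).Nonempty)
    (hdisj : ∀ j j', j ≠ j' → Disjoint (Q j) (Q j'))
    (hcover : Finset.univ.biUnion Q = (Finset.univ : Finset (Fin r))) :
    Set.BijOn
      (fun (x : Fin r → ℝ) (j : Fin (k + 1)) (i : Fin (Q j).card) =>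
        x ((Q j).orderEmbOfFin rfl i))
      (permutohedron r (fun i => (s i : ℝ)) ∩
        ⋂ j : Fin (k + 1),
          {x : Fin r → ℝ |
            ∑ i ∈ (Finset.univ.filter (fun j' => j' ≤ j)).biUnion Q, x i =
              ∑ i ∈ Finset.range
                  (∑ j' ∈ Finset.univ.filter (fun j' => j' ≤ j), (Q j').card),
                (s i : ℝ)})
      (Set.univ.pi fun j : Fin (k + 1) =>
        permutohedron (Q j).card fun i =>
          (s ((∑ j' ∈ Finset.univ.filter (fun j' => j' < j), (Q j').card) + i) : ℝ)) :=
  partitionFace_bijOn_prod_permutohedra_general r k s hmono Q hdisj hcover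
end

section
/- Let Π_{n−1} ⊂ ℝ^n be the permutohedron on (1,2,…,n) and let z ∈ Π_{n−1}. If I_1, I_2 ⊆ {1,…,n} are two subsets each satisfying ∑_{i∈I_j} z_i = |I_j|(|I_j|+1)/2, then I_1 ⊆ I_2 or I_2 ⊆ I_1. In other words, the family of subsets I ⊆ {1,…,n} with ∑_{i∈I} z_i = |I|(|I|+1)/2 is totally ordered by inclusion. -/
/-!
Every vertex `(σ(1), …, σ(n))` of the permutohedron, hence every point `z` of it, satisfies
`∑_{i∈I} z_i ≥ T(|I|)` with `T(k) = k(k+1)/2`, since the `|I|` smallest available values are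
`1, …, |I|`. The left-hand side is modular in `I`, so for two tight sets `I₁, I₂`,
`T(|I₁ ∪ I₂|) + T(|I₁ ∩ I₂|) ≤ T(|I₁|) + T(|I₂|)`. As `|I₁ ∪ I₂| + |I₁ ∩ I₂| = |I₁| + |I₂|`,
the difference of the two sides is `(|I₁ ∪ I₂| - |I₁|)(|I₁ ∪ I₂| - |I₂|) ≥ 0`, so the union has
the size of one of the two sets, i.e. it is one of them.
-/

open Finset

theorem Finset.card_mul_card_add_one_div_two_le_sum_add_one (s : Finset ℕ) :
    (#s : ℝ) * (#s + 1) / 2 ≤ ∑ i ∈ s, ((i : ℝ) + 1) := by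
  induction s using Finset.induction_on_max with
  | empty => simp
  | insert a s hlt ih =>
    have has : a ∉ s := fun ha => (hlt a ha).false
    have hcard : (#s : ℝ) ≤ a := by
      exact_mod_cast (card_le_card fun x hx => mem_range.2 (hlt x hx)).trans_eq (card_range a)
    rw [card_insert_of_notMem has, sum_insert has]
    push_cast
    linarith

theorem Finset.card_mul_card_add_one_div_two_le_sum_val_add_one {n : ℕ} (J : Finset (Fin n)) :
    (#J : ℝ) * (#J + 1) / 2 ≤ ∑ j ∈ J, ((j : ℝ) + 1) := by
  simpa using (J.map Fin.valEmbedding).card_mul_card_add_one_div_two_le_sum_add_one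

theorem card_mul_card_add_one_div_two_le_sum_of_mem_permutohedron {n : ℕ} {z : Fin n → ℝ}
    (hz : z ∈ permutohedron n (fun i => (i : ℝ) + 1)) (I : Finset (Fin n)) :
    (#I : ℝ) * (#I + 1) / 2 ≤ ∑ i ∈ I, z i := by
  have hconvex : Convex ℝ {x : Fin n → ℝ | (#I : ℝ) * (#I + 1) / 2 ≤ ∑ i ∈ I, x i} :=
    convex_halfSpace_ge ⟨fun x y => sum_add_distrib, fun c x => (mul_sum I x c).symm⟩ _
  refine convexHull_min ?_ hconvex hz
  rintro x ⟨σ, hσ⟩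
  have hsum : ∑ i ∈ I, x i = ∑ j ∈ I.map σ.toEmbedding, ((j : ℝ) + 1) := by
    simp only [sum_map, Equiv.toEmbedding_apply, hσ]
  simpa [hsum] using (I.map σ.toEmbedding).card_mul_card_add_one_div_two_le_sum_val_add_one

theorem eq_or_eq_of_triangle_add_triangle_le {a b u m : ℕ} (hsum : u + m = a + b)
    (ha : a ≤ u) (hb : b ≤ u)
    (h : (u : ℝ) * (u + 1) / 2 + m * (m + 1) / 2 ≤ a * (a + 1) / 2 + b * (b + 1) / 2) :
    u = a ∨ u = b := by
  have hm : (m : ℝ) = a + b - u := by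
    rw [eq_sub_iff_add_eq, add_comm]; exact_mod_cast hsum
  have hdefect : ((u : ℝ) - a) * (u - b) ≤ 0 := by
    rw [hm] at h; nlinarith
  have hnonneg : 0 ≤ ((u : ℝ) - a) * (u - b) :=
    mul_nonneg (sub_nonneg.2 (by exact_mod_cast ha)) (sub_nonneg.2 (by exact_mod_cast hb))
  rcases mul_eq_zero.1 (le_antisymm hdefect hnonneg) with h | h
  · exact Or.inl (by exact_mod_cast sub_eq_zero.1 h)
  · exact Or.inr (by exact_mod_cast sub_eq_zero.1 h)

/-- Let `Π_{n-1} ⊂ ℝ^n` be the permutohedron on `(1,2,…,n)` and `z ∈ Π_{n-1}`.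
If `I₁, I₂ ⊆ {1,…,n}` both satisfy `∑_{i∈I} z_i = |I|(|I|+1)/2`, then `I₁ ⊆ I₂` or `I₂ ⊆ I₁`;
i.e. the family of such subsets is totally ordered by inclusion. -/
theorem subsets_saturating_chain (n : ℕ) (z : Fin n → ℝ)
    (hz : z ∈ permutohedron n (fun i => (i : ℝ) + 1))
    (I₁ I₂ : Finset (Fin n))
    (h1 : ∑ i ∈ I₁, z i = (I₁.card : ℝ) * ((I₁.card : ℝ) + 1) / 2)
    (h2 : ∑ i ∈ I₂, z i = (I₂.card : ℝ) * ((I₂.card : ℝ) + 1) / 2) :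
    I₁ ⊆ I₂ ∨ I₂ ⊆ I₁ := by
  have hunion := card_mul_card_add_one_div_two_le_sum_of_mem_permutohedron hz (I₁ ∪ I₂)
  have hinter := card_mul_card_add_one_div_two_le_sum_of_mem_permutohedron hz (I₁ ∩ I₂)
  have hmodular : ∑ i ∈ I₁ ∪ I₂, z i + ∑ i ∈ I₁ ∩ I₂, z i = ∑ i ∈ I₁, z i + ∑ i ∈ I₂, z i :=
    sum_union_inter
  rcases eq_or_eq_of_triangle_add_triangle_le (card_union_add_card_inter I₁ I₂)
      (card_le_card subset_union_left) (card_le_card subset_union_right)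
      (by linarith) with h | h
  · exact Or.inr (union_eq_left.1 (eq_of_subset_of_card_le subset_union_left h.le).symm)
  · exact Or.inl (union_eq_right.1 (eq_of_subset_of_card_le subset_union_right h.le).symm)
end

section
/- Let Π_{n−1} ⊂ ℝ^n be the permutohedron on (1,2,…,n) and let z ∈ Π_{n−1}. The coordinates of z form a permutation of (1,2,…,n) (i.e. z is a vertex of Π_{n−1}) if and only if for every k = 0,1,…,n there exists a subset I ⊆ {1,…,n} with |I| = k and ∑_{i∈I} z_i = k(k+1)/2. -/
open Finset

theorem Finset.sum_le_sum_of_card_eq_of_forall_le {ι α : Type*} [DecidableEq ι]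
    [AddCommMonoid α] [LinearOrder α] [IsOrderedCancelAddMonoid α] {s t : Finset ι} {f : ι → α}
    (hcard : #s = #t) (hf : ∀ i ∈ s, ∀ j ∉ s, f i ≤ f j) :
    ∑ i ∈ s, f i ≤ ∑ i ∈ t, f i := by
  have hsdiff : #(s \ t) = #(t \ s) := card_sdiff_comm hcard
  rw [← sum_sdiff_le_sum_sdiff]
  rcases (t \ s).eq_empty_or_nonempty with hts | hts
  · rw [hts, card_empty, card_eq_zero] at hsdiff
    rw [hsdiff, hts]
  · obtain ⟨j, hj, hjmin⟩ := exists_min_image (t \ s) f hts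
    calc ∑ i ∈ s \ t, f i ≤ #(s \ t) • f j :=
          sum_le_card_nsmul _ _ _ fun i hi => hf i (mem_sdiff.1 hi).1 j (mem_sdiff.1 hj).2
      _ = #(t \ s) • f j := by rw [hsdiff]
      _ ≤ ∑ i ∈ t \ s, f i := card_nsmul_le_sum _ _ _ hjmin

namespace Equiv.Perm

variable {n k : ℕ}

def initialImage (π : Equiv.Perm (Fin n)) (hk : k ≤ n) : Finset (Fin n) :=
  univ.map ((Fin.castLEEmb hk).trans π.toEmbedding)

theorem card_initialImage (π : Equiv.Perm (Fin n)) (hk : k ≤ n) : #(π.initialImage hk) = k := by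
  simp [initialImage]

theorem mem_initialImage {π : Equiv.Perm (Fin n)} {hk : k ≤ n} {i : Fin n} :
    i ∈ π.initialImage hk ↔ (π⁻¹ i : ℕ) < k := by
  simp only [initialImage, mem_map, mem_univ, true_and, Function.Embedding.trans_apply,
    Fin.coe_castLEEmb, Equiv.coe_toEmbedding]
  exact ⟨fun ⟨j, hj⟩ => by simp [← hj], fun h => ⟨⟨_, h⟩, by simp⟩⟩

theorem sum_initialImage {M : Type*} [AddCommMonoid M] (π : Equiv.Perm (Fin n)) (hk : k ≤ n)
    (f : Fin n → M) : ∑ i ∈ π.initialImage hk, f i = ∑ j : Fin k, f (π (Fin.castLE hk j)) :=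
  sum_map _ _ _

theorem sum_initialImage_le_of_monotone {α : Type*} [AddCommMonoid α] [LinearOrder α]
    [IsOrderedCancelAddMonoid α] {π : Equiv.Perm (Fin n)} {f : Fin n → α}
    (hf : Monotone (f ∘ π)) (hk : k ≤ n) {t : Finset (Fin n)} (ht : #t = k) :
    ∑ i ∈ π.initialImage hk, f i ≤ ∑ i ∈ t, f i := by
  refine sum_le_sum_of_card_eq_of_forall_le (by rw [card_initialImage, ht]) fun i hi j hj => ?_
  rw [mem_initialImage] at hi hj
  simpa using hf (show π⁻¹ i ≤ π⁻¹ j from Fin.le_def.2 (by omega))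

end Equiv.Perm

theorem Fin.sum_univ_val_add_one (k : ℕ) :
    ∑ j : Fin k, ((j : ℝ) + 1) = (k : ℝ) * ((k : ℝ) + 1) / 2 := by
  induction k with
  | zero => simp
  | succ k ih =>
    simp only [Fin.sum_univ_castSucc, Fin.val_castSucc, ih, Fin.val_last]
    push_cast; ring

section Permutohedron

variable {n : ℕ} {x : Fin n → ℝ} {σ : Equiv.Perm (Fin n)}

theorem sum_initialImage_inv_of_vertex (hx : ∀ i, x i = ((σ i : ℕ) : ℝ) + 1) {k : ℕ}
    (hk : k ≤ n) : ∑ i ∈ σ⁻¹.initialImage hk, x i = (k : ℝ) * ((k : ℝ) + 1) / 2 := by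
  simp [Equiv.Perm.sum_initialImage, hx, Fin.sum_univ_val_add_one]

theorem le_sum_of_vertex (hx : ∀ i, x i = ((σ i : ℕ) : ℝ) + 1) (t : Finset (Fin n)) :
    (#t : ℝ) * ((#t : ℝ) + 1) / 2 ≤ ∑ i ∈ t, x i := by
  have hmono : Monotone (x ∘ ⇑σ⁻¹) := fun a b hab => by simpa [hx] using hab
  rw [← sum_initialImage_inv_of_vertex hx ((card_le_univ t).trans_eq (Fintype.card_fin n))]
  exact Equiv.Perm.sum_initialImage_le_of_monotone hmono _ rfl

theorem le_sum_of_mem_permutohedron (hx : x ∈ permutohedron n (fun i => (i : ℝ) + 1))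
    (t : Finset (Fin n)) : (#t : ℝ) * ((#t : ℝ) + 1) / 2 ≤ ∑ i ∈ t, x i := by
  have hlin : IsLinearMap ℝ (fun y : Fin n → ℝ => ∑ i ∈ t, y i) :=
    ⟨fun _ _ => sum_add_distrib, fun _ _ => (mul_sum _ _ _).symm⟩
  refine convexHull_min ?_ (convex_halfSpace_ge hlin _) hx
  rintro y ⟨σ, hσ⟩
  exact le_sum_of_vertex hσ t

end Permutohedron

theorem eq_val_add_one_of_sum_castLE {n : ℕ} {y : Fin n → ℝ}
    (h : ∀ k (hk : k ≤ n), ∑ j : Fin k, y (Fin.castLE hk j) = (k : ℝ) * ((k : ℝ) + 1) / 2)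
    (i : Fin n) : y i = (i : ℝ) + 1 := by
  have hsucc := h (i + 1) i.isLt
  simp only [Fin.sum_univ_castSucc, Fin.castLE_castSucc, h i i.isLt.le] at hsucc
  have : Fin.castLE i.isLt (Fin.last i) = i := rfl
  rw [this] at hsucc
  push_cast at hsucc
  linarith

/-- Let `Π_{n-1} ⊂ ℝ^n` be the permutohedron on `(1,2,…,n)` and `z ∈ Π_{n-1}`.
The coordinates of `z` form a permutation of `(1,…,n)` (i.e. `z` is a vertex) if and only if
for every `k = 0,1,…,n` there is a subset `I` with `|I| = k` and `∑_{i∈I} z_i = k(k+1)/2`. -/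
theorem vertex_iff_saturating_subsets (n : ℕ) (z : Fin n → ℝ)
    (hz : z ∈ permutohedron n (fun i => (i : ℝ) + 1)) :
    (∃ σ : Equiv.Perm (Fin n), ∀ i, z i = ((σ i : ℕ) : ℝ) + 1) ↔
      (∀ k : ℕ, k ≤ n → ∃ I : Finset (Fin n), I.card = k ∧
        ∑ i ∈ I, z i = (k : ℝ) * ((k : ℝ) + 1) / 2) := by
  constructor
  · rintro ⟨σ, hσ⟩ k hk
    exact ⟨σ⁻¹.initialImage hk, σ⁻¹.card_initialImage hk,
      sum_initialImage_inv_of_vertex hσ hk⟩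
  · intro h
    set τ := Tuple.sort z
    have hsorted : Monotone (z ∘ τ) := Tuple.monotone_sort z
    have hprefix : ∀ k (hk : k ≤ n),
        ∑ j : Fin k, z (τ (Fin.castLE hk j)) = (k : ℝ) * ((k : ℝ) + 1) / 2 := by
      intro k hk
      obtain ⟨I, hIcard, hIsum⟩ := h k hk
      have hmin := Equiv.Perm.sum_initialImage_le_of_monotone hsorted hk hIcard
      have hlow := le_sum_of_mem_permutohedron hz (τ.initialImage hk)
      rw [Equiv.Perm.card_initialImage] at hlow
      rw [← Equiv.Perm.sum_initialImage]
      exact le_antisymm (hmin.trans hIsum.le) hlow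
    exact ⟨τ⁻¹, fun i => by
      simpa using eq_val_add_one_of_sum_castLE (y := z ∘ τ) hprefix (τ⁻¹ i)⟩
end

section
/- Let G be a subgroup of the symmetric group on {1,…,n} acting on ℝ^n by permuting coordinates, (g·x)_{g(i)} = x_i, and let s be the number of orbits of G on {1,…,n}. Then the fixed-point set Π_{n−1}^G = {x ∈ Π_{n−1} : g·x = x for all g ∈ G} of the permutohedron Π_{n−1} is homeomorphic to the permutohedron Π_{s−1} ⊂ ℝ^s. -/
/-!
`Π^G` and `Π_{s-1}` are nonempty compact convex sets, and two such sets whose affine spans have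
the same dimension are homeomorphic: each is a convex body in its affine span. So only the
dimensions have to be compared. The direction of `Π_{n-1}` is the hyperplane of sum-zero vectors,
since the vertices `v` and `v ∘ (a b)` differ by a nonzero multiple of `eₐ - e_b`.
Averaging over `G` is a linear projection onto the `G`-invariant vectors that maps `Π_{n-1}` into
`Π^G`, so the direction of `Π^G` is the space of invariant sum-zero vectors. Invariant vectors are
the functions on the orbits, so this space has dimension `s - 1`, the dimension of `Π_{s-1}`.
-/

open Set Module

section ConvexBody

variable {E F : Type*} [NormedAddCommGroup E] [NormedSpace ℝ E] [FiniteDimensional ℝ E]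
  [NormedAddCommGroup F] [NormedSpace ℝ F] [FiniteDimensional ℝ F]

theorem Convex.nonempty_homeomorph_of_interior_nonempty {A : Set E} {B : Set F}
    (hAc : Convex ℝ A) (hAk : IsCompact A) (hAi : (interior A).Nonempty)
    (hBc : Convex ℝ B) (hBk : IsCompact B) (hBi : (interior B).Nonempty)
    (h : finrank ℝ E = finrank ℝ F) : Nonempty (A ≃ₜ B) := by
  let e := ContinuousLinearEquiv.ofFinrankEq h
  have hAc' : Convex ℝ (e '' A) := hAc.linear_image e.toLinearMap
  have hAk' : IsCompact (e '' A) := hAk.image e.continuous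
  have hAi' : (interior (e '' A)).Nonempty := by
    rw [← e.coe_toHomeomorph, ← Homeomorph.image_interior]; exact hAi.image _
  obtain ⟨φ, -, hφ, -⟩ := exists_homeomorph_image_eq hAc' hAi'
    (NormedSpace.isVonNBounded_of_isBounded _ hAk'.isBounded) hBc hBi
    (NormedSpace.isVonNBounded_of_isBounded _ hBk.isBounded)
  rw [hAk'.isClosed.closure_eq, hBk.isClosed.closure_eq] at hφ
  exact ⟨(e.toHomeomorph.image A).trans ((φ.image _).trans (.setCongr hφ))⟩

theorem Convex.exists_homeomorph_interior_nonempty {A : Set E}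
    (hAc : Convex ℝ A) (hAk : IsCompact A) (hAne : A.Nonempty) :
    ∃ B : Set (affineSpan ℝ A).direction, Convex ℝ B ∧ IsCompact B ∧
      (interior B).Nonempty ∧ Nonempty (A ≃ₜ B) := by
  obtain ⟨p, hp⟩ := hAne
  let p' : affineSpan ℝ A := ⟨p, subset_affineSpan ℝ A hp⟩
  have : Nonempty (affineSpan ℝ A) := ⟨p'⟩
  let φ := AffineIsometryEquiv.vaddConst ℝ p'
  let f := (affineSpan ℝ A).subtype.comp φ.toAffineEquiv.toAffineMap
  have hf : Isometry f := isometry_subtype_coe.comp φ.isometry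
  have hAf : A ⊆ range f := fun x hx =>
    ⟨φ.symm ⟨x, subset_affineSpan ℝ A hx⟩, by simp [f]⟩
  refine ⟨f ⁻¹' A, hAc.affine_preimage f, hf.isClosedEmbedding.isCompact_preimage hAk, ?_,
    ⟨(hf.isEmbedding.homeomorphOfSubsetRange hAf).symm⟩⟩
  have hfA : f ⁻¹' A = φ.toHomeomorph ⁻¹' ((↑) ⁻¹' A : Set (affineSpan ℝ A)) := rfl
  rw [hfA, ← Homeomorph.preimage_interior]
  exact ((Set.Nonempty.intrinsicInterior hAc ⟨p, hp⟩).of_image).preimage φ.surjective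

theorem Convex.nonempty_homeomorph_of_finrank_vectorSpan_eq {A : Set E} {B : Set F}
    (hAc : Convex ℝ A) (hAk : IsCompact A) (hAne : A.Nonempty)
    (hBc : Convex ℝ B) (hBk : IsCompact B) (hBne : B.Nonempty)
    (h : finrank ℝ (vectorSpan ℝ A) = finrank ℝ (vectorSpan ℝ B)) :
    Nonempty (A ≃ₜ B) := by
  obtain ⟨A', hA'c, hA'k, hA'i, ⟨eA⟩⟩ := hAc.exists_homeomorph_interior_nonempty hAk hAne
  obtain ⟨B', hB'c, hB'k, hB'i, ⟨eB⟩⟩ := hBc.exists_homeomorph_interior_nonempty hBk hBne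
  obtain ⟨e⟩ := hA'c.nonempty_homeomorph_of_interior_nonempty hA'k hA'i hB'c hB'k hB'i
    (by rwa [direction_affineSpan, direction_affineSpan])
  exact ⟨eA.trans (e.trans eB.symm)⟩

end ConvexBody

section CoordSum

variable (ι : Type*) [Fintype ι]

def coordSum : (ι → ℝ) →ₗ[ℝ] ℝ := ∑ i, LinearMap.proj i

variable {ι}

@[simp]
theorem coordSum_apply (x : ι → ℝ) : coordSum ι x = ∑ i, x i := by
  simp [coordSum]

theorem finrank_ker_coordSum_comp_funLeft {κ : Type*} [Fintype κ] {f : ι → κ}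
    (hf : Function.Surjective f) :
    finrank ℝ (LinearMap.ker (coordSum ι ∘ₗ LinearMap.funLeft ℝ ℝ f)) =
      Fintype.card κ - 1 := by
  cases isEmpty_or_nonempty κ with
  | inl _ => simp [finrank_zero_of_subsingleton]
  | inr _ =>
    have hne : coordSum ι ∘ₗ LinearMap.funLeft ℝ ℝ f ≠ 0 := by
      have : Nonempty ι := hf.nonempty
      refine fun h => Fintype.card_ne_zero (α := ι) ?_
      simpa [LinearMap.funLeft_apply] using LinearMap.congr_fun h 1
    have := Module.Dual.finrank_ker_add_one_of_ne_zero hne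
    rw [Module.finrank_fintype_fun_eq_card] at this
    omega

theorem finrank_ker_coordSum : finrank ℝ (LinearMap.ker (coordSum ι)) = Fintype.card ι - 1 := by
  have hid : LinearMap.funLeft ℝ ℝ (id : ι → ι) = LinearMap.id :=
    LinearMap.ext (LinearMap.funLeft_id ℝ ℝ)
  have := finrank_ker_coordSum_comp_funLeft (ι := ι) Function.surjective_id
  rwa [hid, LinearMap.comp_id] at this

end CoordSum

section FixedSubmodule

variable {ι : Type*} (G : Subgroup (Equiv.Perm ι))

def fixedSubmodule : Submodule ℝ (ι → ℝ) where
  carrier := {x | ∀ g ∈ G, ∀ i, x (g i) = x i}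
  add_mem' hx hy g hg i := by simp [hx g hg i, hy g hg i]
  zero_mem' _ _ _ := rfl
  smul_mem' c x hx g hg i := by simp [hx g hg i]

theorem fixedSubmodule_eq_range_funLeft :
    fixedSubmodule G = LinearMap.range
      (LinearMap.funLeft ℝ ℝ (Quotient.mk _ : ι → MulAction.orbitRel.Quotient G ι)) := by
  ext x
  constructor
  · intro hx
    refine ⟨fun q => x q.out, funext fun i => ?_⟩
    obtain ⟨g, hg⟩ := Quotient.exact (Quotient.out_eq (Quotient.mk (MulAction.orbitRel G ι) i))
    simp only [LinearMap.funLeft_apply]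
    rw [← hg]
    exact hx g g.2 i
  · rintro ⟨y, rfl⟩ g hg i
    simp only [LinearMap.funLeft_apply]
    exact congrArg y (Quotient.sound ⟨⟨g, hg⟩, rfl⟩)

theorem finrank_fixedSubmodule_inf_ker_coordSum [Fintype ι] :
    finrank ℝ (fixedSubmodule G ⊓ LinearMap.ker (coordSum ι) : Submodule ℝ (ι → ℝ)) =
      Nat.card (MulAction.orbitRel.Quotient G ι) - 1 := by
  classical
  let Φ := LinearMap.funLeft ℝ ℝ (Quotient.mk _ : ι → MulAction.orbitRel.Quotient G ι)
  have hΦ : Function.Injective Φ :=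
    LinearMap.funLeft_injective_of_surjective _ _ _ Quotient.mk_surjective
  rw [fixedSubmodule_eq_range_funLeft, ← Submodule.map_comap_eq, ← LinearMap.ker_comp,
    ← (Submodule.equivMapOfInjective Φ hΦ _).finrank_eq,
    finrank_ker_coordSum_comp_funLeft Quotient.mk_surjective, Nat.card_eq_fintype_card]

theorem coe_fixedSubmodule :
    (fixedSubmodule G : Set (ι → ℝ)) = {x | ∀ g ∈ G, ∀ i, x (g i) = x i} := rfl

variable [Fintype G]

noncomputable def average : (ι → ℝ) →ₗ[ℝ] (ι → ℝ) :=
  (Fintype.card G : ℝ)⁻¹ • ∑ g : G, LinearMap.funLeft ℝ ℝ ⇑(g : Equiv.Perm ι)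

theorem average_apply (x : ι → ℝ) :
    average G x = ∑ g : G, (Fintype.card G : ℝ)⁻¹ • (x ∘ ⇑(g : Equiv.Perm ι)) := by
  simp [average, Finset.smul_sum, LinearMap.funLeft]

theorem average_mem_fixedSubmodule (x : ι → ℝ) : average G x ∈ fixedSubmodule G := by
  intro h hh i
  simp only [average_apply, Finset.sum_apply, Pi.smul_apply, Function.comp_apply]
  exact Fintype.sum_equiv (Equiv.mulRight ⟨h, hh⟩) _ _ fun g => rfl

theorem average_eq_self {x : ι → ℝ} (hx : x ∈ fixedSubmodule G) : average G x = x := by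
  have hxg : ∀ g : G, x ∘ ⇑(g : Equiv.Perm ι) = x := fun g => funext (hx g g.2)
  rw [average_apply, Fintype.sum_congr _ _ fun g => by rw [hxg], Finset.sum_const,
    Finset.card_univ, ← Nat.cast_smul_eq_nsmul ℝ, smul_smul,
    mul_inv_cancel₀ (Nat.cast_ne_zero.2 Fintype.card_ne_zero), one_smul]

theorem average_mem_of_convex {C : Set (ι → ℝ)} (hC : Convex ℝ C)
    (hGC : ∀ g ∈ G, ∀ x ∈ C, x ∘ ⇑g ∈ C) {x : ι → ℝ} (hx : x ∈ C) :
    average G x ∈ C := by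
  rw [average_apply]
  refine hC.sum_mem (fun _ _ => by positivity) ?_ fun g _ => hGC g g.2 x hx
  simp [Finset.card_univ]

end FixedSubmodule

section Permutohedron

variable {m : ℕ} {s : ℕ → ℝ}

theorem permutohedron_nonempty : (permutohedron m s).Nonempty :=
  ⟨fun i : Fin m => s i, subset_convexHull ℝ _ ⟨1, fun _ => rfl⟩⟩

theorem isCompact_permutohedron : IsCompact (permutohedron m s) := by
  refine Set.Finite.isCompact_convexHull (𝕜 := ℝ) ?_
  refine (Set.finite_range fun σ : Equiv.Perm (Fin m) => fun i => s (σ i)).subset ?_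
  rintro _ ⟨σ, hσ⟩
  exact ⟨σ, funext fun i => (hσ i).symm⟩

theorem sum_eq_of_mem_permutohedron {x : Fin m → ℝ} (hx : x ∈ permutohedron m s) :
    ∑ i, x i = ∑ i : Fin m, s i := by
  have : permutohedron m s ⊆ coordSum (Fin m) ⁻¹' {∑ i : Fin m, s i} := by
    refine convexHull_min ?_ ((convex_singleton _).linear_preimage (coordSum (Fin m)))
    rintro y ⟨σ, hσ⟩
    simp [hσ, Equiv.sum_comp σ (fun i : Fin m => s i)]
  simpa using this hx

theorem comp_mem_permutohedron (σ : Equiv.Perm (Fin m)) {x : Fin m → ℝ}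
    (hx : x ∈ permutohedron m s) : x ∘ σ ∈ permutohedron m s := by
  have hx' : x ∘ σ ∈ LinearMap.funLeft ℝ ℝ σ '' permutohedron m s := mem_image_of_mem _ hx
  rw [permutohedron, LinearMap.image_convexHull] at hx'
  refine convexHull_mono ?_ hx'
  rintro _ ⟨y, ⟨τ, hτ⟩, rfl⟩
  exact ⟨τ * σ, fun i => hτ (σ i)⟩

theorem single_sub_single_mem_vectorSpan_permutohedron (hs : Function.Injective s)
    (a b : Fin m) : Pi.single a 1 - Pi.single b 1 ∈ vectorSpan ℝ (permutohedron m s) := by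
  rcases eq_or_ne a b with rfl | hab
  · simp
  let v : Equiv.Perm (Fin m) → Fin m → ℝ := fun σ i => s (σ i)
  have hv : ∀ σ, v σ ∈ permutohedron m s := fun σ =>
    subset_convexHull ℝ _ ⟨σ, fun _ => rfl⟩
  have hsab : s b - s a ≠ 0 := sub_ne_zero.2 fun h => hab (Fin.val_injective (hs h)).symm
  have hdiff : v (Equiv.swap a b) - v 1 = (s b - s a) • (Pi.single a 1 - Pi.single b 1) := by
    funext i
    rcases eq_or_ne i a with rfl | hia
    · simp [v, hab]
    rcases eq_or_ne i b with rfl | hib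
    · simp [v, hab.symm]
    · simp [v, hia, hib, Equiv.swap_apply_of_ne_of_ne hia hib]
  rw [← inv_smul_smul₀ hsab (Pi.single a 1 - Pi.single b 1), ← hdiff]
  exact Submodule.smul_mem _ _ (vsub_mem_vectorSpan ℝ (hv _) (hv _))

theorem vectorSpan_permutohedron (hs : Function.Injective s) :
    vectorSpan ℝ (permutohedron m s) = LinearMap.ker (coordSum (Fin m)) := by
  refine le_antisymm ?_ fun x hx => ?_
  · rw [vectorSpan_def, Submodule.span_le]
    rintro _ ⟨x, hx, y, hy, rfl⟩
    simp [Finset.sum_sub_distrib, sum_eq_of_mem_permutohedron hx, sum_eq_of_mem_permutohedron hy]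
  cases isEmpty_or_nonempty (Fin m) with
  | inl _ => simp [Subsingleton.elim x 0]
  | inr h =>
    obtain ⟨a₀⟩ := h
    have hx0 : ∑ i, x i = 0 := by simpa using hx
    have : x = ∑ a, x a • (Pi.single a 1 - Pi.single a₀ 1) := by
      simp only [smul_sub, Finset.sum_sub_distrib, ← Finset.sum_smul, hx0, zero_smul, sub_zero]
      exact pi_eq_sum_univ' x
    rw [this]
    exact Submodule.sum_mem _ fun a _ =>
      Submodule.smul_mem _ _ (single_sub_single_mem_vectorSpan_permutohedron hs a a₀)

end Permutohedron

section FixedPoints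

variable {m : ℕ} {s : ℕ → ℝ} (G : Subgroup (Equiv.Perm (Fin m)))

theorem image_average_permutohedron_subset [Fintype G] :
    average G '' permutohedron m s ⊆ permutohedron m s ∩ fixedSubmodule G := by
  rintro _ ⟨x, hx, rfl⟩
  exact ⟨average_mem_of_convex G (convex_convexHull ℝ _)
    (fun g _ _ => comp_mem_permutohedron g) hx, average_mem_fixedSubmodule G x⟩

theorem vectorSpan_permutohedron_inter_fixedSubmodule (hs : Function.Injective s) :
    vectorSpan ℝ (permutohedron m s ∩ fixedSubmodule G) =
      fixedSubmodule G ⊓ LinearMap.ker (coordSum (Fin m)) := by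
  let _ := Fintype.ofFinite G
  refine le_antisymm (le_inf ?_ ?_) fun x hx => ?_
  · rw [vectorSpan_def, Submodule.span_le]
    rintro _ ⟨x, hx, y, hy, rfl⟩
    exact (fixedSubmodule G).sub_mem hx.2 hy.2
  · exact (vectorSpan_mono ℝ inter_subset_left).trans (vectorSpan_permutohedron hs).le
  obtain ⟨hxG, hxs⟩ := Submodule.mem_inf.1 hx
  rw [← vectorSpan_permutohedron hs] at hxs
  rw [← average_eq_self G hxG]
  refine vectorSpan_mono ℝ (image_average_permutohedron_subset G) ?_
  rw [← (average G).coe_toAffineMap, ← AffineMap.map_vectorSpan]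
  exact Submodule.mem_map_of_mem hxs

end FixedPoints

/-- Let `G` be a subgroup of the symmetric group on `{1,…,n}`, acting on
`ℝ^n` by `(g·x)_{g(i)} = x_i` (equivalently, `x` is fixed iff `x (g i) = x i` for all `i`),
and let `s` be the number of orbits of `G` on `{1,…,n}`. Then the fixed-point set
`Π_{n-1}^G` of the permutohedron on `(1,…,n)` is homeomorphic to the permutohedron
`Π_{s-1} ⊂ ℝ^s`. -/
theorem fixedPoints_permutohedron_homeomorph (n : ℕ)
    (G : Subgroup (Equiv.Perm (Fin n))) :
    Nonempty
      (↥(permutohedron n (fun i => (i : ℝ) + 1) ∩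
          {x : Fin n → ℝ | ∀ g ∈ G, ∀ i : Fin n, x (g i) = x i}) ≃ₜ
        ↥(permutohedron (Nat.card (MulAction.orbitRel.Quotient G (Fin n)))
          (fun i => (i : ℝ) + 1))) := by
  let _ := Fintype.ofFinite G
  have hs : Function.Injective fun i : ℕ => (i : ℝ) + 1 := fun i j h => by simpa using h
  rw [← coe_fixedSubmodule]
  refine Convex.nonempty_homeomorph_of_finrank_vectorSpan_eq
    ((convex_convexHull ℝ _).inter (fixedSubmodule G).convex)
    (isCompact_permutohedron.inter_right (fixedSubmodule G).closed_of_finiteDimensional)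
    ((permutohedron_nonempty.image _).mono (image_average_permutohedron_subset G))
    (convex_convexHull ℝ _) isCompact_permutohedron permutohedron_nonempty ?_
  rw [vectorSpan_permutohedron_inter_fixedSubmodule G hs, vectorSpan_permutohedron hs,
    finrank_fixedSubmodule_inf_ker_coordSum, finrank_ker_coordSum, Fintype.card_fin]
end

section
/- Let 𝔭 be an ordered partition of {1,…,r} and let a < b be two elements lying in the same block of 𝔭; let 𝔭' denote the b-reduction of 𝔭. Then the operation of b-reduction defines a bijection from the set of refinements 𝔮 of 𝔭 in which a and b lie in the same block of 𝔮 onto the set of refinements of 𝔭'. -/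
/-- An ordered partition of a finite type, given as the list of its blocks:
all blocks nonempty, pairwise disjoint, and covering everything. -/
def IsOrderedPartitionList {α : Type*} [DecidableEq α] [Fintype α]
    (l : List (Finset α)) : Prop :=
  (∀ P ∈ l, P.Nonempty) ∧ l.Pairwise Disjoint ∧
    l.foldr (· ∪ ·) ∅ = (Finset.univ : Finset α)

/-- `q` is a refinement of `p`: `q` splits into consecutive nonempty segments whose unions
are the successive blocks of `p`. -/
def IsRefinement {α : Type*} [DecidableEq α] (q p : List (Finset α)) : Prop :=
  ∃ c : List (List (Finset α)), (∀ chunk ∈ c, chunk ≠ []) ∧ c.flatten = q ∧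
    c.map (fun chunk => chunk.foldr (· ∪ ·) ∅) = p

/-- Re-indexing map of `{1,…,r} \ {b}` onto `{1,…,r-1}` (here `r` is `r+2`): indices below `b`
are kept, indices above `b` are shifted down by one. -/
def reduceIdx {r : ℕ} (b : Fin (r + 2)) (x : Fin (r + 2)) : Fin (r + 1) :=
  if _h : (x : ℕ) < (b : ℕ) then ⟨x, by have hb := b.isLt; omega⟩
  else ⟨(x : ℕ) - 1, by have hx := x.isLt; omega⟩

/-- The `b`-reduction of an ordered partition (as a list of blocks): drop `b` and re-index. -/
def reducePartitionList {r : ℕ} (b : Fin (r + 2)) (p : List (Finset (Fin (r + 2)))) :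
    List (Finset (Fin (r + 1))) :=
  p.map fun P => (P.erase b).image (reduceIdx b)

/-!
Reducing a block is pulling it back along the embedding `b.succAbove : Fin (r + 1) → Fin (r + 2)`,
whose image misses exactly `b`. Pulling back along a retraction `Fin (r + 2) → Fin (r + 1)` that
sends `b` to the index of `a` is a right inverse, and a left inverse precisely on those
partitions in which `a` and `b` lie in the same block. Both operations are pullbacks of blocks
along a map, so they preserve ordered partitions (as long as no block becomes empty) and
refinements.
-/

open Finset

section Pullback

variable {α β γ : Type*}

theorem mem_foldr_union [DecidableEq α] {l : List (Finset α)} {x : α} :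
    x ∈ l.foldr (· ∪ ·) ∅ ↔ ∃ P ∈ l, x ∈ P := by
  induction l <;> simp_all

theorem mem_iff_mem_of_pairwise_disjoint {l : List (Finset α)} (hl : l.Pairwise Disjoint)
    {P Q : Finset α} (hP : P ∈ l) (hQ : Q ∈ l) {a b : α} (ha : a ∈ P) (hb : b ∈ P) :
    a ∈ Q ↔ b ∈ Q := by
  by_cases hPQ : P = Q
  · subst hPQ
    exact iff_of_true ha hb
  · have hdisj := hl.forall hP hQ hPQ
    exact iff_of_false (disjoint_left.mp hdisj ha) (disjoint_left.mp hdisj hb)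

def pullbackBlocks [Fintype α] [DecidableEq β] (f : α → β) (l : List (Finset β)) :
    List (Finset α) :=
  l.map fun Q => ({x | f x ∈ Q} : Finset α)

theorem pullbackBlocks_pullbackBlocks [Fintype α] [Fintype β] [DecidableEq β] [DecidableEq γ]
    (f : α → β) (g : β → γ) (l : List (Finset γ)) :
    pullbackBlocks f (pullbackBlocks g l) = pullbackBlocks (g ∘ f) l := by
  simp [pullbackBlocks, Function.comp_def]

theorem pullbackBlocks_eq_self [Fintype α] [DecidableEq α] {f : α → α} {l : List (Finset α)}
    (h : ∀ Q ∈ l, ∀ x, f x ∈ Q ↔ x ∈ Q) : pullbackBlocks f l = l := by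
  conv_rhs => rw [← List.map_id l]
  refine List.map_congr_left fun Q hQ => ?_
  ext x
  simp [h Q hQ]

theorem foldr_union_pullbackBlocks [Fintype α] [DecidableEq α] [DecidableEq β] (f : α → β)
    (l : List (Finset β)) :
    (pullbackBlocks f l).foldr (· ∪ ·) ∅ = ({x | f x ∈ l.foldr (· ∪ ·) ∅} : Finset α) := by
  ext x
  simp [pullbackBlocks, mem_foldr_union]

theorem IsRefinement.pullbackBlocks [Fintype α] [DecidableEq α] [DecidableEq β]
    {q p : List (Finset β)} (h : IsRefinement q p) (f : α → β) :
    IsRefinement (pullbackBlocks f q) (pullbackBlocks f p) := by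
  obtain ⟨c, hne, rfl, rfl⟩ := h
  refine ⟨c.map (_root_.pullbackBlocks f), ?_, ?_, ?_⟩
  · simpa [_root_.pullbackBlocks] using hne
  · rw [_root_.pullbackBlocks, List.map_flatten]
    rfl
  · rw [_root_.pullbackBlocks, List.map_map, List.map_map]
    exact List.map_congr_left fun chunk _ => foldr_union_pullbackBlocks f chunk

theorem IsOrderedPartitionList.pullbackBlocks [Fintype α] [DecidableEq α] [Fintype β]
    [DecidableEq β] {l : List (Finset β)} (hl : IsOrderedPartitionList l) (f : α → β)
    (hf : ∀ Q ∈ l, ∃ x, f x ∈ Q) : IsOrderedPartitionList (pullbackBlocks f l) := by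
  obtain ⟨-, hdisj, hcover⟩ := hl
  refine ⟨?_, ?_, ?_⟩
  · simp only [_root_.pullbackBlocks, List.mem_map]
    rintro _ ⟨Q, hQ, rfl⟩
    obtain ⟨x, hx⟩ := hf Q hQ
    exact ⟨x, by simpa using hx⟩
  · exact hdisj.map _ fun P Q h => disjoint_left.mpr fun x hP hQ =>
      disjoint_left.mp h (mem_filter.mp hP).2 (mem_filter.mp hQ).2
  · rw [foldr_union_pullbackBlocks, hcover]
    simp

end Pullback

section Reduction

variable {r : ℕ}

theorem reduceIdx_succAbove (b : Fin (r + 2)) (y : Fin (r + 1)) :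
    reduceIdx b (b.succAbove y) = y := by
  by_cases h : y.castSucc < b
  · rw [Fin.succAbove_of_castSucc_lt _ _ h, reduceIdx, dif_pos (Fin.lt_def.mp h)]
    rfl
  · rw [Fin.succAbove_of_le_castSucc _ _ (not_lt.mp h), reduceIdx, dif_neg]
    · rfl
    · rw [Fin.lt_def, Fin.val_castSucc] at h
      rw [Fin.val_succ]
      omega

theorem succAbove_reduceIdx {b x : Fin (r + 2)} (hx : x ≠ b) :
    b.succAbove (reduceIdx b x) = x := by
  obtain ⟨y, rfl⟩ := Fin.exists_succAbove_eq hx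
  rw [reduceIdx_succAbove]

theorem reducePartitionList_eq_pullbackBlocks (b : Fin (r + 2)) :
    reducePartitionList b = pullbackBlocks b.succAbove := by
  funext p
  refine List.map_congr_left fun P _ => ?_
  ext y
  simp only [mem_image, mem_erase, mem_filter, mem_univ, true_and]
  constructor
  · rintro ⟨x, ⟨hxb, hxP⟩, rfl⟩
    rwa [succAbove_reduceIdx hxb]
  · exact fun hy => ⟨_, ⟨b.succAbove_ne y, hy⟩, reduceIdx_succAbove b y⟩

/-- Pulling blocks back along this map re-inserts `b` into the block containing `a`. -/
def mergeIdx (a b : Fin (r + 2)) (x : Fin (r + 2)) : Fin (r + 1) :=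
  reduceIdx b (if x = b then a else x)

theorem mergeIdx_succAbove (a b : Fin (r + 2)) (y : Fin (r + 1)) :
    mergeIdx a b (b.succAbove y) = y := by
  rw [mergeIdx, if_neg (b.succAbove_ne y), reduceIdx_succAbove]

theorem succAbove_mergeIdx {a b : Fin (r + 2)} (hab : a ≠ b) (x : Fin (r + 2)) :
    b.succAbove (mergeIdx a b x) = if x = b then a else x := by
  rw [mergeIdx]
  split_ifs with hx
  · exact succAbove_reduceIdx hab
  · exact succAbove_reduceIdx hx

theorem pullbackBlocks_succAbove_mergeIdx (a b : Fin (r + 2)) (l : List (Finset (Fin (r + 1)))) :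
    pullbackBlocks b.succAbove (pullbackBlocks (mergeIdx a b) l) = l := by
  rw [pullbackBlocks_pullbackBlocks]
  exact pullbackBlocks_eq_self fun Q _ y => by rw [Function.comp_apply, mergeIdx_succAbove]

theorem pullbackBlocks_mergeIdx_succAbove {a b : Fin (r + 2)} (hab : a ≠ b)
    {l : List (Finset (Fin (r + 2)))} (hl : l.Pairwise Disjoint)
    (hsame : ∃ P ∈ l, a ∈ P ∧ b ∈ P) :
    pullbackBlocks (mergeIdx a b) (pullbackBlocks b.succAbove l) = l := by
  obtain ⟨P, hP, haP, hbP⟩ := hsame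
  rw [pullbackBlocks_pullbackBlocks]
  refine pullbackBlocks_eq_self fun Q hQ x => ?_
  rw [Function.comp_apply, succAbove_mergeIdx hab]
  split_ifs with hx
  · rw [hx]
    exact mem_iff_mem_of_pairwise_disjoint hl hP hQ haP hbP
  · rfl

theorem exists_succAbove_mem {a b : Fin (r + 2)} (hab : a ≠ b) {l : List (Finset (Fin (r + 2)))}
    (hl : IsOrderedPartitionList l) (hsame : ∃ P ∈ l, a ∈ P ∧ b ∈ P) :
    ∀ Q ∈ l, ∃ y, b.succAbove y ∈ Q := by
  obtain ⟨P, hP, haP, hbP⟩ := hsame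
  intro Q hQ
  obtain ⟨x, hxQ⟩ := hl.1 Q hQ
  by_cases hxb : x = b
  · rw [hxb] at hxQ
    have haQ := (mem_iff_mem_of_pairwise_disjoint hl.2.1 hP hQ haP hbP).mpr hxQ
    exact ⟨reduceIdx b a, by rwa [succAbove_reduceIdx hab]⟩
  · exact ⟨reduceIdx b x, by rwa [succAbove_reduceIdx hxb]⟩

theorem exists_mem_pullbackBlocks_mergeIdx {a b : Fin (r + 2)} (hab : a ≠ b)
    {l : List (Finset (Fin (r + 1)))} (hl : l.foldr (· ∪ ·) ∅ = univ) :
    ∃ P ∈ pullbackBlocks (mergeIdx a b) l, a ∈ P ∧ b ∈ P := by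
  obtain ⟨Q, hQ, haQ⟩ := mem_foldr_union.mp (hl ▸ mem_univ (reduceIdx b a))
  refine ⟨_, List.mem_map_of_mem hQ, ?_, ?_⟩ <;> rw [mem_filter_univ, mergeIdx]
  · rwa [if_neg hab]
  · rwa [if_pos rfl]

end Reduction

/-- Let `𝔭` be an ordered partition of `{1,…,r}` (with `r ≥ 2`; ambient
type `Fin (r+2)` here) and `a < b` two elements in the same block of `𝔭`; let `𝔭'` be the
`b`-reduction of `𝔭`. Then `b`-reduction is a bijection from the set of refinements `𝔮`
of `𝔭` in which `a` and `b` lie in the same block onto the set of refinements of `𝔭'`. -/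
theorem reduction_bijOn_refinements (r : ℕ) (p : List (Finset (Fin (r + 2))))
    (hp : IsOrderedPartitionList p)
    (a b : Fin (r + 2)) (hab : a < b)
    (hsame : ∃ P ∈ p, a ∈ P ∧ b ∈ P) :
    Set.BijOn (reducePartitionList b)
      {q : List (Finset (Fin (r + 2))) |
        IsOrderedPartitionList q ∧ IsRefinement q p ∧ ∃ P ∈ q, a ∈ P ∧ b ∈ P}
      {q' : List (Finset (Fin (r + 1))) |
        IsOrderedPartitionList q' ∧ IsRefinement q' (reducePartitionList b p)} := by
  rw [reducePartitionList_eq_pullbackBlocks]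
  refine Set.InvOn.bijOn (f' := pullbackBlocks (mergeIdx a b)) ⟨?_, ?_⟩ ?_ ?_
  · rintro q ⟨hq, -, hq_same⟩
    exact pullbackBlocks_mergeIdx_succAbove hab.ne hq.2.1 hq_same
  · exact fun q' _ => pullbackBlocks_succAbove_mergeIdx a b q'
  · rintro q ⟨hq, hqp, hq_same⟩
    exact ⟨hq.pullbackBlocks _ (exists_succAbove_mem hab.ne hq hq_same), hqp.pullbackBlocks _⟩
  · rintro q' ⟨hq', hq'p⟩
    refine ⟨hq'.pullbackBlocks _ fun Q hQ => ?_, ?_, ?_⟩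
    · obtain ⟨y, hy⟩ := hq'.1 Q hQ
      exact ⟨b.succAbove y, by rwa [mergeIdx_succAbove]⟩
    · have := hq'p.pullbackBlocks (mergeIdx a b)
      rwa [pullbackBlocks_mergeIdx_succAbove hab.ne hp.2.1 hsame] at this
    · exact exists_mem_pullbackBlocks_mergeIdx hab.ne hq'.2.2
end

section
/- Let n ≥ 1 and let ν_1, ν_2 be two sign assignments on the n-cube. Then there exists a function t : {0,1}^n → F_2 such that for every edge (u,v) of the n-cube, ν_1(u,v) + ν_2(u,v) = t(u) + t(v) in F_2. -/
/-- A sign assignment on the `n`-cube, with vertices encoded as subsets `u ⊆ {1,…,n}`: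
a function on pairs (used only on edges `v ⊆ u`, `|u| = |v| + 1`) such that around every
2-dimensional face the four edge values sum to `1` in `F₂`. -/
def IsSignAssignment {n : ℕ} (ν : Finset (Fin n) → Finset (Fin n) → ZMod 2) : Prop :=
  ∀ u v w₁ w₂ : Finset (Fin n), v ⊆ u → u.card = v.card + 2 →
    v ⊆ w₁ → w₁ ⊆ u → w₁.card = v.card + 1 →
    v ⊆ w₂ → w₂ ⊆ u → w₂.card = v.card + 1 → w₁ ≠ w₂ →
    ν u w₁ + ν w₁ v + ν u w₂ + ν w₂ v = 1

/-!
The sum `δ = ν₁ + ν₂` of two sign assignments sums to `0` around every square, i.e. it is a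
1-cocycle on the cube. A cocycle is the coboundary of the potential obtained by summing `δ`
along a fixed descending path from each vertex to `∅`: the one that deletes the largest element
at every step. For an edge `v ⊂ u` either `v` is the first step of the path from `u`, or the
largest element `m` of `u` lies in `v`, and then the square `u, v, u \ {m}, v \ {m}` reduces the
claim to the edge `v \ {m} ⊂ u \ {m}`.
-/

section CubeCocycle

variable {α G : Type*} [LinearOrder α] [AddCommGroup G]

def IsCubeCocycle (δ : Finset α → Finset α → G) : Prop :=
  ∀ u v w₁ w₂ : Finset α, v ⊆ u → u.card = v.card + 2 →
    v ⊆ w₁ → w₁ ⊆ u → w₁.card = v.card + 1 →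
    v ⊆ w₂ → w₂ ⊆ u → w₂.card = v.card + 1 → w₁ ≠ w₂ →
    δ u w₁ + δ w₁ v = δ u w₂ + δ w₂ v

def cubePotential (δ : Finset α → Finset α → G) (u : Finset α) : G :=
  if h : u.Nonempty then
    δ u (u.erase (u.max' h)) + cubePotential δ (u.erase (u.max' h))
  else 0
termination_by u.card
decreasing_by exact Finset.card_erase_lt_of_mem (Finset.max'_mem _ h)

theorem cubePotential_of_nonempty (δ : Finset α → Finset α → G) {u : Finset α}
    (hu : u.Nonempty) :
    cubePotential δ u = δ u (u.erase (u.max' hu)) + cubePotential δ (u.erase (u.max' hu)) := by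
  rw [cubePotential, dif_pos hu]

theorem Finset.max'_eq_of_subset {u v : Finset α} (hu : u.Nonempty) (hvu : v ⊆ u)
    (hmv : u.max' hu ∈ v) : v.max' ⟨_, hmv⟩ = u.max' hu :=
  le_antisymm (Finset.max'_subset _ hvu) (v.le_max' _ hmv)

theorem IsCubeCocycle.eq_cubePotential_sub {δ : Finset α → Finset α → G} (hδ : IsCubeCocycle δ)
    {u v : Finset α} (hvu : v ⊆ u) (hcard : u.card = v.card + 1) :
    δ u v = cubePotential δ u - cubePotential δ v := by
  induction u using Finset.strongInduction generalizing v with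
  | H u ih =>
    have hu : u.Nonempty := by rw [← Finset.card_pos, hcard]; omega
    set m := u.max' hu
    have hmu : m ∈ u := u.max'_mem hu
    rw [cubePotential_of_nonempty δ hu]
    by_cases hmv : m ∈ v
    · have hv : v.Nonempty := ⟨m, hmv⟩
      rw [cubePotential_of_nonempty δ hv, Finset.max'_eq_of_subset hu hvu hmv]
      have hcard_u := Finset.card_erase_of_mem hmu
      have hcard_v := Finset.card_erase_of_mem hmv
      have hv_pos := hv.card_pos
      have hv'u' : v.erase m ⊆ u.erase m := Finset.erase_subset_erase _ hvu
      have hv_ne : v ≠ u.erase m := fun h => Finset.notMem_erase m u (h ▸ hmv)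
      have hedge := ih (u.erase m) (Finset.erase_ssubset hmu) hv'u' (by omega)
      have hsquare := hδ u (v.erase m) v (u.erase m) (hv'u'.trans (Finset.erase_subset _ _))
        (by omega) (Finset.erase_subset _ _) hvu (by omega) hv'u' (Finset.erase_subset _ _)
        (by omega) hv_ne
      rw [hedge] at hsquare
      linear_combination (norm := abel) hsquare
    · have hv : v = u.erase m :=
        Finset.eq_of_subset_of_card_le
          (fun x hx => Finset.mem_erase.mpr ⟨fun h => hmv (h ▸ hx), hvu hx⟩)
          (by rw [Finset.card_erase_of_mem hmu]; omega)
      rw [← hv]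
      abel

end CubeCocycle

theorem IsSignAssignment.isCubeCocycle_add {n : ℕ}
    {ν₁ ν₂ : Finset (Fin n) → Finset (Fin n) → ZMod 2}
    (h₁ : IsSignAssignment ν₁) (h₂ : IsSignAssignment ν₂) :
    IsCubeCocycle (fun u v => ν₁ u v + ν₂ u v) := by
  intro u v w₁ w₂ hvu hcard hvw₁ hw₁u hcard₁ hvw₂ hw₂u hcard₂ hne
  have e₁ := h₁ u v w₁ w₂ hvu hcard hvw₁ hw₁u hcard₁ hvw₂ hw₂u hcard₂ hne
  have e₂ := h₂ u v w₁ w₂ hvu hcard hvw₁ hw₁u hcard₁ hvw₂ hw₂u hcard₂ hne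
  linear_combination (norm := ring_nf) e₁ + e₂
  reduce_mod_char

theorem sign_assignments_differ_by_coboundary_general (n : ℕ)
    (ν₁ ν₂ : Finset (Fin n) → Finset (Fin n) → ZMod 2)
    (h₁ : IsSignAssignment ν₁) (h₂ : IsSignAssignment ν₂) :
    ∃ t : Finset (Fin n) → ZMod 2,
      ∀ u v : Finset (Fin n), v ⊆ u → u.card = v.card + 1 →
        ν₁ u v + ν₂ u v = t u + t v := by
  refine ⟨cubePotential (fun u v => ν₁ u v + ν₂ u v), fun u v hvu hcard => ?_⟩
  rw [(h₁.isCubeCocycle_add h₂).eq_cubePotential_sub hvu hcard, CharTwo.sub_eq_add]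

/-- Any two sign assignments on the `n`-cube (`n ≥ 1`) differ by a
coboundary: there is `t : {0,1}^n → F₂` with `ν₁(u,v) + ν₂(u,v) = t(u) + t(v)` on every
edge `(u,v)`. -/
theorem sign_assignments_differ_by_coboundary (n : ℕ) (hn : 1 ≤ n)
    (ν₁ ν₂ : Finset (Fin n) → Finset (Fin n) → ZMod 2)
    (h₁ : IsSignAssignment ν₁) (h₂ : IsSignAssignment ν₂) :
    ∃ t : Finset (Fin n) → ZMod 2,
      ∀ u v : Finset (Fin n), v ⊆ u → u.card = v.card + 1 →
        ν₁ u v + ν₂ u v = t u + t v :=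
  sign_assignments_differ_by_coboundary_general n ν₁ ν₂ h₁ h₂
end
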